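/- Let A, B, C be real numbers with B < 0 and C < 0, and suppose the quartic polynomial P(X) = X^4 + A X^2 + B X + C has four real roots r1, r2, r3, r4, i.e. P(X) = (X - r1)(X - r2)(X - r3)(X - r4) as polynomials over the reals. Then exactly three of r1, r2, r3, r4 are negative and the remaining one is strictly positive. -/

import Mathlib

/-!
By Descartes' rule of signs `P` has at most one positive root: whatever the sign of `A`, the
nonzero coefficients of `P` change sign exactly once, from the leading `1` to `B < 0`.
Evaluating the factorisation at `0` gives `∏ i, -r i = C < 0`, so no root vanishes and not all
roots are negative. Hence exactly one root is positive and the other three are negative.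
-/

open Polynomial

section DepressedQuartic

variable {R : Type*} [CommRing R] [LinearOrder R] [IsStrictOrderedRing R]

theorem coeffList_depressed_quartic (a b c : R) :
    (X ^ 4 + C a * X ^ 2 + C b * X + C c).coeffList = [1, 0, a, b, c] := by
  have hdeg : (X ^ 4 + C a * X ^ 2 + C b * X + C c : R[X]).degree = 4 := by compute_degree!
  rw [coeffList, hdeg]
  simp [List.range_succ, coeff_X, coeff_C, coeff_X_pow]

theorem signVariations_depressed_quartic {b c : R} (a : R) (hb : b < 0) (hc : c < 0) :
    (X ^ 4 + C a * X ^ 2 + C b * X + C c).signVariations = 1 := by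
  rw [signVariations, coeffList_depressed_quartic]
  simp only [List.map_cons, List.map_nil, sign_neg hb, sign_neg hc, sign_one, sign_zero]
  cases SignType.sign a <;> decide

end DepressedQuartic

theorem countP_roots_prod_X_sub_C {R ι : Type*} [CommRing R] [IsDomain R] [Fintype ι]
    (r : ι → R) (p : R → Prop) [DecidablePred p] :
    (∏ i, (X - C (r i))).roots.countP p = (Finset.univ.filter fun i => p (r i)).card := by
  have hprod : ∏ i, (X - C (r i)) = ((Finset.univ.val.map r).map fun a => X - C a).prod := by
    rw [Multiset.map_map]; rfl
  rw [hprod, roots_multiset_prod_X_sub_C, Multiset.countP_map]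
  rfl

theorem card_filter_pos_le_one_of_depressed_quartic_eq_prod {R ι : Type*} [CommRing R]
    [LinearOrder R] [IsStrictOrderedRing R] [Fintype ι] {b c : R} (a : R) (hb : b < 0)
    (hc : c < 0) (r : ι → R) (h : X ^ 4 + C a * X ^ 2 + C b * X + C c = ∏ i, (X - C (r i))) :
    (Finset.univ.filter fun i => 0 < r i).card ≤ 1 := by
  rw [← countP_roots_prod_X_sub_C, ← h, ← signVariations_depressed_quartic a hb hc]
  exact roots_countP_pos_le_signVariations _

theorem stmt1 (A B C : ℝ) (hB : B < 0) (hC : C < 0) (r : Fin 4 → ℝ)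
    (hfact : ∀ x : ℝ, x ^ 4 + A * x ^ 2 + B * x + C = ∏ i, (x - r i)) :
    (Finset.univ.filter fun i => r i < 0).card = 3 ∧
      (Finset.univ.filter fun i => 0 < r i).card = 1 := by
  have hpoly : X ^ 4 + .C A * X ^ 2 + .C B * X + .C C = ∏ i, (X - .C (r i)) :=
    Polynomial.funext fun x => by simpa [eval_prod] using hfact x
  have hpos_le := card_filter_pos_le_one_of_depressed_quartic_eq_prod A hB hC r hpoly
  have hprod : ∏ i, -r i = C := by simpa using (hfact 0).symm
  have hpos_ne : (Finset.univ.filter fun i => 0 < r i).card ≠ 0 := by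
    intro h
    have hnonpos : ∀ i, r i ≤ 0 := by simpa [Finset.filter_eq_empty_iff] using h
    have : 0 ≤ ∏ i, -r i := Finset.prod_nonneg fun i _ => neg_nonneg.mpr (hnonpos i)
    linarith
  have hne : ∀ i, r i ≠ 0 := fun i hi =>
    hC.ne (hprod ▸ Finset.prod_eq_zero (Finset.mem_univ i) (by simp [hi]))
  have hsplit : (Finset.univ.filter fun i => r i < 0).card
      + (Finset.univ.filter fun i => 0 < r i).card = 4 := by
    have hnonneg : (Finset.univ.filter fun i => 0 ≤ r i) = Finset.univ.filter fun i => 0 < r i :=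
      Finset.filter_congr fun i _ => (hne i).symm.le_iff_lt
    simpa [hnonneg] using Finset.card_filter_add_card_filter_not (s := Finset.univ) fun i => r i < 0
  omega
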